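/- arXiv:1110.0167 — 2 statements merged into one kernel-verified Lean document; each statement's English description precedes it below -/
import Mathlib

section
/- (Proposition 1, imaginary part) Under the standing assumptions, if δ > 0, then for every θ > 0 and every b with 0 ≤ b ≤ √θ, for all w ∈ H × H one has |im [T w, w]_θ| ≤ M_{θ,b} · |re [T w, w]_θ| + b · [w, w]_θ, where M_{θ,b} = ν + 2/(δ·(b + √(b² + 4θ))) + (√θ − b)/β. -/
set_option maxSynthPendingDepth 3

open scoped InnerProductSpace

/-- The matrix operator `T(w₁, w₂) = (−D w₁ − A w₂, w₁)` on `H × H`. -/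
noncomputable def Tlin {H : Type*} [NormedAddCommGroup H] [InnerProductSpace ℂ H]
    (A D : H →L[ℂ] H) : (H × H) →L[ℂ] (H × H) :=
  ((-(D.comp (ContinuousLinearMap.fst ℂ H H)))
      - A.comp (ContinuousLinearMap.snd ℂ H H)).prod (ContinuousLinearMap.fst ℂ H H)

/-- The sesquilinear form `[w, v]_θ` on `H × H`, where `S = A^{1/2}` and
`Sinv = A^{-1/2}`. -/
noncomputable def formTheta {H : Type*} [NormedAddCommGroup H] [InnerProductSpace ℂ H]
    (D S Sinv : H →L[ℂ] H) (θ : ℝ) (w v : H × H) : ℂ :=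
  inner ℂ w.1 v.1 + (θ : ℂ) * inner ℂ (Sinv w.1) (Sinv v.1) + inner ℂ (S w.2) (S v.2)
    + (θ : ℂ) * inner ℂ w.2 v.2 + (θ : ℂ) * inner ℂ (Sinv (D w.2)) (Sinv (D v.2))
    + (θ : ℂ) * inner ℂ (Sinv (D w.2)) (Sinv v.1) + (θ : ℂ) * inner ℂ (Sinv w.1) (Sinv (D v.2))

/-!
Write `w = (x, y)` and `‖z‖₁ = ‖A^{1/2} z‖`. In `[T w, w]_θ` the off-diagonal terms of the form cancel
the `D x`-contributions of `θ ⟪A^{-1/2} (T w)₁, A^{-1/2} ·⟫`, so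
`re [T w, w]_θ = -(re⟪D x, x⟫ + θ re⟪D y, y⟫)`, whereas `im [T w, w]_θ` is
`-im⟪D x, x⟫ + θ im⟪D y, y⟫`, bounded by sectoriality, plus the cross terms
`2 im⟪A^{1/2} x, A^{1/2} y⟫` and `2θ im⟪x, y⟫`. These are split by Young's inequality with the
weights `t = 2/(b + √(b² + 4θ))` and `√θ`; a `b`-share of the result is absorbed by
`b [w, w]_θ ≥ b (‖x‖² + ‖y‖₁² + θ‖y‖²)`, the rest by `δ ‖·‖₁² ≤ re⟪D ·, ·⟫` and
`β ‖·‖² ≤ re⟪D ·, ·⟫`. Finally `β > 0` because `‖z‖ ≤ ‖A^{-1/2}‖ ‖z‖₁`.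
-/

open ComplexConjugate

lemma ciInf_div_mul_le {ι : Type*} {f g : ι → ℝ} (hf : ∀ i, 0 ≤ f i) (hg : ∀ i, 0 ≤ g i) (j : ι) :
    (⨅ i, f i / g i) * g j ≤ f j := by
  rcases (hg j).eq_or_lt with hj | hj
  · rw [← hj, mul_zero]
    exact hf j
  · rw [← le_div_iff₀ hj]
    exact ciInf_le ⟨0, Set.forall_mem_range.2 fun i ↦ div_nonneg (hf i) (hg i)⟩ j

lemma le_div_iInf_ne_zero_div {E : Type*} [Zero E] {f g : E → ℝ} (hf : ∀ x, 0 ≤ f x)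
    (hg : ∀ x, 0 ≤ g x) (hg0 : g 0 = 0) (hpos : 0 < ⨅ x : {x : E // x ≠ 0}, f x / g x) (z : E) :
    g z ≤ f z / ⨅ x : {x : E // x ≠ 0}, f x / g x := by
  rw [le_div_iff₀' hpos]
  by_cases hz : z = 0
  · rw [hz, hg0, mul_zero]
    exact hf 0
  · exact ciInf_div_mul_le (f := fun x : {x : E // x ≠ 0} ↦ f x) (fun x ↦ hf x) (fun x ↦ hg x)
      ⟨z, hz⟩

section Operators

variable {H : Type*} [NormedAddCommGroup H] [InnerProductSpace ℂ H]

lemma norm_le_opNorm_mul_norm_of_mul_eq_one {S Sinv : H →L[ℂ] H} (h : Sinv * S = 1) (x : H) :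
    ‖x‖ ≤ ‖Sinv‖ * ‖S x‖ := by
  have hx : Sinv (S x) = x := DFunLike.congr_fun h x
  simpa only [hx] using Sinv.le_opNorm (S x)

lemma iInf_re_inner_div_norm_sq_pos [Nontrivial H] {D S Sinv : H →L[ℂ] H}
    (hSinv : S * Sinv = 1) (hSinv' : Sinv * S = 1) (hD : ∀ x, 0 ≤ (⟪D x, x⟫_ℂ).re)
    (hδ : 0 < ⨅ x : {x : H // x ≠ 0}, (⟪D (x : H), (x : H)⟫_ℂ).re / ‖S (x : H)‖ ^ 2) :
    0 < ⨅ x : {x : H // x ≠ 0}, (⟪D (x : H), (x : H)⟫_ℂ).re / ‖(x : H)‖ ^ 2 := by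
  set δ := ⨅ x : {x : H // x ≠ 0}, (⟪D (x : H), (x : H)⟫_ℂ).re / ‖S (x : H)‖ ^ 2
  have hSinv_pos : 0 < ‖Sinv‖ := by
    refine norm_pos_iff.2 fun h ↦ one_ne_zero (α := H →L[ℂ] H) ?_
    rw [← hSinv, h, mul_zero]
  obtain ⟨z, hz⟩ := exists_ne (0 : H)
  have : Nonempty {x : H // x ≠ 0} := ⟨⟨z, hz⟩⟩
  refine lt_of_lt_of_le (div_pos hδ (pow_pos hSinv_pos 2)) (le_ciInf fun x ↦ ?_)
  have hx : 0 < ‖(x : H)‖ ^ 2 := pow_pos (norm_pos_iff.2 x.2) 2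
  rw [div_le_div_iff₀ (pow_pos hSinv_pos 2) hx]
  have hSx : δ * ‖S x‖ ^ 2 ≤ (⟪D (x : H), (x : H)⟫_ℂ).re :=
    (le_div_iff₀' hδ).1 <| le_div_iInf_ne_zero_div (f := fun x ↦ (⟪D x, x⟫_ℂ).re)
      (g := fun x ↦ ‖S x‖ ^ 2) hD (fun _ ↦ sq_nonneg _) (by simp) hδ x
  calc δ * ‖(x : H)‖ ^ 2 ≤ δ * (‖Sinv‖ * ‖S x‖) ^ 2 := by
        gcongr
        exact norm_le_opNorm_mul_norm_of_mul_eq_one hSinv' x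
    _ = (δ * ‖S x‖ ^ 2) * ‖Sinv‖ ^ 2 := by ring
    _ ≤ (⟪D (x : H), (x : H)⟫_ℂ).re * ‖Sinv‖ ^ 2 := by gcongr

lemma re_formTheta_self (D S Sinv : H →L[ℂ] H) (θ : ℝ) (x y : H) :
    (formTheta D S Sinv θ (x, y) (x, y)).re
      = ‖x‖ ^ 2 + ‖S y‖ ^ 2 + θ * ‖y‖ ^ 2 + θ * ‖Sinv x + Sinv (D y)‖ ^ 2 := by
  have hcross : (⟪Sinv (D y), Sinv x⟫_ℂ).re = (⟪Sinv x, Sinv (D y)⟫_ℂ).re := by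
    rw [← inner_conj_symm (Sinv x), Complex.conj_re]
  have hsq := norm_add_sq (𝕜 := ℂ) (Sinv x) (Sinv (D y))
  simp only [formTheta, inner_self_eq_norm_sq_to_K, Complex.coe_algebraMap, Complex.add_re,
    Complex.mul_re, Complex.ofReal_re, Complex.ofReal_im, zero_mul, sub_zero, ← Complex.ofReal_pow,
    hcross, hsq, RCLike.re_to_complex]
  ring

lemma norm_sq_add_le_re_formTheta_self (D S Sinv : H →L[ℂ] H) {θ : ℝ} (hθ : 0 ≤ θ) (x y : H) :
    ‖x‖ ^ 2 + ‖S y‖ ^ 2 + θ * ‖y‖ ^ 2 ≤ (formTheta D S Sinv θ (x, y) (x, y)).re := by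
  rw [re_formTheta_self]
  have := mul_nonneg hθ (sq_nonneg ‖Sinv x + Sinv (D y)‖)
  linarith

variable [CompleteSpace H] {A D S Sinv : H →L[ℂ] H}

lemma formTheta_Tlin_self (hSsa : IsSelfAdjoint S) (hSsq : S * S = A) (hSinv : S * Sinv = 1)
    (hSinv' : Sinv * S = 1) (θ : ℝ) (x y : H) :
    formTheta D S Sinv θ (Tlin A D (x, y)) (x, y)
      = -⟪D x, x⟫_ℂ - θ * conj ⟪D y, y⟫_ℂ + (⟪S x, S y⟫_ℂ - conj ⟪S x, S y⟫_ℂ)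
        + θ * (⟪x, y⟫_ℂ - conj ⟪x, y⟫_ℂ) := by
  have hSym : ∀ a c : H, ⟪S a, c⟫_ℂ = ⟪a, S c⟫_ℂ := hSsa.isSymmetric
  have hSSinv (z : H) : S (Sinv z) = z := DFunLike.congr_fun hSinv z
  have hSinvA (z : H) : Sinv (A z) = S z := by
    rw [← hSsq]
    exact DFunLike.congr_fun hSinv' (S z)
  have hA : ⟪A y, x⟫_ℂ = conj ⟪S x, S y⟫_ℂ := by
    rw [← hSsq]
    exact (hSym (S y) x).trans (inner_conj_symm _ _).symm
  have e2 : ⟪S y, Sinv x⟫_ℂ = conj ⟪x, y⟫_ℂ := by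
    rw [hSym, hSSinv, inner_conj_symm]
  have e3 : ⟪S y, Sinv (D y)⟫_ℂ = conj ⟪D y, y⟫_ℂ := by
    rw [hSym, hSSinv, inner_conj_symm]
  simp only [formTheta, Tlin, ContinuousLinearMap.prod_apply, sub_apply, neg_apply,
    ContinuousLinearMap.comp_apply, ContinuousLinearMap.coe_fst', ContinuousLinearMap.coe_snd',
    inner_sub_left, inner_neg_left, map_sub, map_neg, hSinvA, hA, e2, e3]
  ring

lemma re_formTheta_Tlin_self (hSsa : IsSelfAdjoint S) (hSsq : S * S = A) (hSinv : S * Sinv = 1)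
    (hSinv' : Sinv * S = 1) (θ : ℝ) (x y : H) :
    (formTheta D S Sinv θ (Tlin A D (x, y)) (x, y)).re
      = -((⟪D x, x⟫_ℂ).re + θ * (⟪D y, y⟫_ℂ).re) := by
  rw [formTheta_Tlin_self hSsa hSsq hSinv hSinv']
  simp only [Complex.add_re, Complex.sub_re, Complex.neg_re, Complex.mul_re, Complex.ofReal_re,
    Complex.ofReal_im, Complex.conj_re, Complex.conj_im]
  ring

lemma im_formTheta_Tlin_self (hSsa : IsSelfAdjoint S) (hSsq : S * S = A) (hSinv : S * Sinv = 1)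
    (hSinv' : Sinv * S = 1) (θ : ℝ) (x y : H) :
    (formTheta D S Sinv θ (Tlin A D (x, y)) (x, y)).im
      = -(⟪D x, x⟫_ℂ).im + θ * (⟪D y, y⟫_ℂ).im + 2 * (⟪S x, S y⟫_ℂ).im
        + 2 * θ * (⟪x, y⟫_ℂ).im := by
  rw [formTheta_Tlin_self hSsa hSsq hSinv hSinv']
  simp only [Complex.add_im, Complex.sub_im, Complex.neg_im, Complex.mul_im, Complex.ofReal_re,
    Complex.ofReal_im, Complex.conj_re, Complex.conj_im]
  ring

lemma abs_im_formTheta_Tlin_self_le (hSsa : IsSelfAdjoint S) (hSsq : S * S = A)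
    (hSinv : S * Sinv = 1) (hSinv' : Sinv * S = 1) {ν : ℝ}
    (hDsec : ∀ x : H, |(⟪D x, x⟫_ℂ).im| ≤ ν * (⟪D x, x⟫_ℂ).re) {θ : ℝ} (hθ : 0 ≤ θ) (x y : H) :
    |(formTheta D S Sinv θ (Tlin A D (x, y)) (x, y)).im|
      ≤ ν * ((⟪D x, x⟫_ℂ).re + θ * (⟪D y, y⟫_ℂ).re) + 2 * ‖S x‖ * ‖S y‖
        + 2 * θ * ‖x‖ * ‖y‖ := by
  have hDx := abs_le.mp (hDsec x)
  have hDy := abs_le.mp (hDsec y)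
  have hS := abs_le.mp ((Complex.abs_im_le_norm _).trans (norm_inner_le_norm (S x) (S y)))
  have hxy := abs_le.mp ((Complex.abs_im_le_norm _).trans (norm_inner_le_norm x y))
  rw [im_formTheta_Tlin_self hSsa hSsq hSinv hSinv', abs_le]
  constructor <;> linarith [mul_le_mul_of_nonneg_left hDy.1 hθ, mul_le_mul_of_nonneg_left hDy.2 hθ,
    mul_le_mul_of_nonneg_left hxy.1 hθ, mul_le_mul_of_nonneg_left hxy.2 hθ]

end Operators

lemma two_mul_le_of_mul_eq_one {t s : ℝ} (ht : 0 < t) (hts : t * s = 1) (u v : ℝ) :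
    2 * u * v ≤ t * u ^ 2 + s * v ^ 2 := by
  have hsq : t * (t * u ^ 2 + s * v ^ 2 - 2 * u * v) = (t * u - v) ^ 2 := by
    linear_combination v ^ 2 * hts
  nlinarith [sq_nonneg (t * u - v)]

lemma two_mul_mul_le_sqrt_mul_sq_add {θ : ℝ} (hθ : 0 ≤ θ) (u v : ℝ) :
    2 * θ * u * v ≤ √θ * u ^ 2 + √θ * θ * v ^ 2 := by
  obtain ⟨r, hr, rfl⟩ : ∃ r, 0 ≤ r ∧ θ = r ^ 2 := ⟨√θ, Real.sqrt_nonneg θ, (Real.sq_sqrt hθ).symm⟩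
  rw [Real.sqrt_sq hr]
  nlinarith [mul_nonneg hr (sq_nonneg (u - r * v))]

lemma add_sqrt_sq_add_pos {θ : ℝ} (hθ : 0 < θ) (b : ℝ) : 0 < b + √(b ^ 2 + 4 * θ) := by
  have : |b| < √(b ^ 2 + 4 * θ) := by
    rw [Real.lt_sqrt (abs_nonneg b), sq_abs]
    linarith
  linarith [neg_abs_le b]

lemma two_div_add_sqrt_mul_eq_one {θ : ℝ} (hθ : 0 < θ) (b : ℝ) :
    2 / (b + √(b ^ 2 + 4 * θ)) * (b + 2 / (b + √(b ^ 2 + 4 * θ)) * θ) = 1 := by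
  have hpos := add_sqrt_sq_add_pos hθ b
  have hsq : √(b ^ 2 + 4 * θ) ^ 2 = b ^ 2 + 4 * θ := Real.sq_sqrt (by positivity)
  field_simp
  linear_combination -hsq

theorem prop1_im_general
    {H : Type*} [NormedAddCommGroup H] [InnerProductSpace ℂ H] [CompleteSpace H]
    [Nontrivial H]
    (A D S Sinv : H →L[ℂ] H)
    (hSsa : IsSelfAdjoint S)
    (hSsq : S * S = A)
    (hSinv : S * Sinv = 1) (hSinv' : Sinv * S = 1)
    (hDacc : ∀ x : H, 0 ≤ (inner ℂ (D x) x : ℂ).re)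
    (ν : ℝ)
    (hDsec : ∀ x : H, |(inner ℂ (D x) x : ℂ).im| ≤ ν * (inner ℂ (D x) x : ℂ).re)
    (β δ : ℝ)
    (hβ : β = ⨅ x : {x : H // x ≠ 0}, (inner ℂ (D (x : H)) (x : H) : ℂ).re / ‖(x : H)‖ ^ 2)
    (hδ : δ = ⨅ x : {x : H // x ≠ 0}, (inner ℂ (D (x : H)) (x : H) : ℂ).re / ‖S (x : H)‖ ^ 2)
    (hδpos : 0 < δ)
    (θ : ℝ) (hθ : 0 < θ)
    (b : ℝ) (hb0 : 0 ≤ b) (hb : b ≤ Real.sqrt θ)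
    (M : ℝ)
    (hM : M = ν + 2 / (δ * (b + Real.sqrt (b ^ 2 + 4 * θ))) + (Real.sqrt θ - b) / β) :
    ∀ w : H × H,
      |(formTheta D S Sinv θ (Tlin A D w) w).im|
        ≤ M * |(formTheta D S Sinv θ (Tlin A D w) w).re|
          + b * (formTheta D S Sinv θ w w).re := by
  rintro ⟨x, y⟩
  set t := 2 / (b + √(b ^ 2 + 4 * θ))
  set r := √θ
  have ht : 0 < t := div_pos two_pos (add_sqrt_sq_add_pos hθ b)
  have hMt : M = ν + t / δ + (r - b) / β := by rw [hM, mul_comm, ← div_div]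
  have hβpos : 0 < β := hβ ▸ iInf_re_inner_div_norm_sq_pos hSinv hSinv' hDacc (hδ ▸ hδpos)
  have hδD : ∀ z : H, ‖S z‖ ^ 2 ≤ (⟪D z, z⟫_ℂ).re / δ := hδ ▸ le_div_iInf_ne_zero_div
    (f := fun z ↦ (⟪D z, z⟫_ℂ).re) hDacc (fun _ ↦ sq_nonneg _) (by simp) (hδ ▸ hδpos)
  have hβD : ∀ z : H, ‖z‖ ^ 2 ≤ (⟪D z, z⟫_ℂ).re / β := hβ ▸ le_div_iInf_ne_zero_div
    (f := fun z ↦ (⟪D z, z⟫_ℂ).re) hDacc (fun _ ↦ sq_nonneg _) (by simp) (hβ ▸ hβpos)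
  have hcrossS : 2 * ‖S x‖ * ‖S y‖ ≤ t * ‖S x‖ ^ 2 + (b + t * θ) * ‖S y‖ ^ 2 :=
    two_mul_le_of_mul_eq_one ht (two_div_add_sqrt_mul_eq_one hθ b) _ _
  have hcross := two_mul_mul_le_sqrt_mul_sq_add hθ.le ‖x‖ ‖y‖
  have hw := mul_le_mul_of_nonneg_left (norm_sq_add_le_re_formTheta_self D S Sinv hθ.le x y) hb0
  have hrb : 0 ≤ r - b := sub_nonneg.2 hb
  rw [re_formTheta_Tlin_self hSsa hSsq hSinv hSinv', abs_neg,
    abs_of_nonneg (add_nonneg (hDacc x) (mul_nonneg hθ.le (hDacc y))), hMt]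
  calc _ ≤ ν * ((⟪D x, x⟫_ℂ).re + θ * (⟪D y, y⟫_ℂ).re) + 2 * ‖S x‖ * ‖S y‖
        + 2 * θ * ‖x‖ * ‖y‖ := abs_im_formTheta_Tlin_self_le hSsa hSsq hSinv hSinv' hDsec hθ.le x y
    _ ≤ _ := by
      linear_combination hcrossS + hcross + hw + mul_le_mul_of_nonneg_left (hδD x) ht.le +
        mul_le_mul_of_nonneg_left (hδD y) (mul_nonneg ht.le hθ.le) +
        mul_le_mul_of_nonneg_left (hβD x) hrb +
        mul_le_mul_of_nonneg_left (hβD y) (mul_nonneg hrb hθ.le)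

/-- Proposition 1, imaginary part: if `δ > 0`, then for every `θ > 0`
and every `b` with `0 ≤ b ≤ √θ`, for all `w ∈ H × H` one has
`|im [T w, w]_θ| ≤ M_{θ,b} · |re [T w, w]_θ| + b · [w, w]_θ`, where
`M_{θ,b} = ν + 2/(δ(b + √(b² + 4θ))) + (√θ − b)/β`. -/
theorem prop1_im
    {H : Type*} [NormedAddCommGroup H] [InnerProductSpace ℂ H] [CompleteSpace H]
    [Nontrivial H]
    (A D S Sinv : H →L[ℂ] H)
    (hA : IsSelfAdjoint A) (a₀ : ℝ) (ha₀ : 0 < a₀)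
    (hApd : ∀ x : H, a₀ * ‖x‖ ^ 2 ≤ (inner ℂ (A x) x : ℂ).re)
    (hSsa : IsSelfAdjoint S) (hSpos : ∀ x : H, 0 ≤ (inner ℂ (S x) x : ℂ).re)
    (hSsq : S * S = A)
    (hSinv : S * Sinv = 1) (hSinv' : Sinv * S = 1)
    (hDacc : ∀ x : H, 0 ≤ (inner ℂ (D x) x : ℂ).re)
    (ν : ℝ) (hν : 0 < ν)
    (hDsec : ∀ x : H, |(inner ℂ (D x) x : ℂ).im| ≤ ν * (inner ℂ (D x) x : ℂ).re)
    (β δ : ℝ)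
    (hβ : β = ⨅ x : {x : H // x ≠ 0}, (inner ℂ (D (x : H)) (x : H) : ℂ).re / ‖(x : H)‖ ^ 2)
    (hδ : δ = ⨅ x : {x : H // x ≠ 0}, (inner ℂ (D (x : H)) (x : H) : ℂ).re / ‖S (x : H)‖ ^ 2)
    (hδpos : 0 < δ)
    (θ : ℝ) (hθ : 0 < θ)
    (b : ℝ) (hb0 : 0 ≤ b) (hb : b ≤ Real.sqrt θ)
    (M : ℝ)
    (hM : M = ν + 2 / (δ * (b + Real.sqrt (b ^ 2 + 4 * θ))) + (Real.sqrt θ - b) / β) :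
    ∀ w : H × H,
      |(formTheta D S Sinv θ (Tlin A D w) w).im|
        ≤ M * |(formTheta D S Sinv θ (Tlin A D w) w).re|
          + b * (formTheta D S Sinv θ w w).re :=
  prop1_im_general A D S Sinv hSsa hSsq hSinv hSinv' hDacc ν hDsec β δ hβ hδ hδpos θ hθ b hb0 hb M
    hM
end

section
/- Under the standing assumptions, if δ > 0, then for every θ > 0 and every b with 0 ≤ b ≤ √θ, the spectrum of T is contained in the set {λ ∈ ℂ : re λ ≤ −ω_θ and |im λ| ≤ M_{θ,b}·|re λ| + b}, where M_{θ,b} = ν + 2/(δ·(b + √(b² + 4θ))) + (√θ − b)/β. -/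
set_option maxSynthPendingDepth 3

open scoped InnerProductSpace

theorem exists_sq_add_mul_add_eq_mul (d c : ℂ) :
    ∃ r₁ r₂ : ℂ, ∀ z, z ^ 2 + d * z + c = (z - r₁) * (z - r₂) := by
  obtain ⟨s, hs⟩ := IsAlgClosed.exists_eq_mul_self (d ^ 2 - 4 * c)
  exact ⟨(-d + s) / 2, (-d - s) / 2, fun z => by linear_combination (-1 / 4 : ℂ) * hs⟩

theorem le_mul_of_sq_sub_le {a t c Y : ℝ} (ha : 0 < a) (ht : 0 < t) (hY : 1 ≤ Y)
    (h : (t - a) ^ 2 ≤ c * a * t) (hcY : c * Y ≤ (Y - 1) ^ 2) : a ≤ Y * t := by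
  by_contra! hlt
  have h₁ : (t - a) ^ 2 * Y ≤ (Y - 1) ^ 2 * (a * t) := by
    nlinarith [mul_le_mul_of_nonneg_right h (by linarith : (0:ℝ) ≤ Y),
      mul_le_mul_of_nonneg_right hcY (mul_pos ha ht).le]
  nlinarith [mul_pos (sub_pos.2 hlt) (by nlinarith : 0 < a * Y - t)]

theorem sub_mul_sub_le_sq {p q Y : ℝ} (hp : 0 ≤ p) (hq : 0 ≤ q) (hpq : 1 ≤ p * q)
    (hpY : p ≤ Y) : (Y - p) * (Y - q) ≤ (Y - 1) ^ 2 := by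
  have h2 : 2 ≤ p + q := by nlinarith [sq_nonneg (p - q)]
  nlinarith [mul_nonneg (sub_nonneg.2 h2) (sub_nonneg.2 hpY), sq_nonneg (p - 1)]

theorem upper_root_spec {u v K : ℝ} (hu : 0 ≤ u) (hv : 0 ≤ v) (hK : 0 ≤ K) :
    let Λ := (u + v + K + √((u + v + K) ^ 2 - 4 * (u * v))) / 2
    u ≤ Λ ∧ v ≤ Λ ∧ (Λ - u) * (Λ - v) = K * Λ := by
  intro Λ
  have hdisc : 0 ≤ (u + v + K) ^ 2 - 4 * (u * v) := by nlinarith [sq_nonneg (u - v)]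
  have hs := Real.sq_sqrt hdisc
  have hs0 := Real.sqrt_nonneg ((u + v + K) ^ 2 - 4 * (u * v))
  refine ⟨?_, ?_, by simp only [Λ]; linear_combination hs / 4⟩
  · simp only [Λ]; nlinarith [sq_nonneg (v + K - u)]
  · simp only [Λ]; nlinarith [sq_nonneg (u + K - v)]

theorem two_mul_mul_min_le {s a b c Z : ℝ} (ha : 0 ≤ a) (hb : 0 ≤ b)
    (hc : 0 ≤ c) (hZ : 0 < Z) (hZcb : Z ≤ 2 * (c + b)) :
    2 * s * min (s ^ 2) a ≤ 2 * a * s ^ 2 / Z + c * s ^ 2 + a * b := by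
  have hamgm : 2 * s ≤ 2 * s ^ 2 / Z + (c + b) := by
    rw [div_add' _ _ _ hZ.ne', le_div_iff₀ hZ]
    nlinarith [sq_nonneg (2 * s - Z)]
  rcases le_total (s ^ 2) a with h | h
  · rw [min_eq_left h]
    have hw : 0 ≤ 2 * s ^ 2 / Z := by positivity
    have e : 2 * a * s ^ 2 / Z = 2 * s ^ 2 / Z * a := by ring
    nlinarith [mul_le_mul_of_nonneg_right hamgm (sq_nonneg s), mul_le_mul_of_nonneg_left h hw,
      mul_le_mul_of_nonneg_left h hb]
  · rw [min_eq_right h]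
    have e : 2 * a * s ^ 2 / Z = 2 * s ^ 2 / Z * a := by ring
    nlinarith [mul_le_mul_of_nonneg_right hamgm ha, mul_le_mul_of_nonneg_left h hc]

def spectralRegion (ω M b : ℝ) : Set ℂ :=
  {z | z.re ≤ -ω ∧ |z.im| ≤ M * |z.re| + b}

theorem isClosed_spectralRegion (ω M b : ℝ) : IsClosed (spectralRegion ω M b) :=
  (isClosed_le Complex.continuous_re continuous_const).inter <|
    isClosed_le (by fun_prop : Continuous fun z : ℂ => |z.im|)
      (by fun_prop : Continuous fun z : ℂ => M * |z.re| + b)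

theorem conj_mem_spectralRegion {ω M b : ℝ} {z : ℂ} (hz : z ∈ spectralRegion ω M b) :
    starRingEnd ℂ z ∈ spectralRegion ω M b := by
  simpa [spectralRegion] using hz

namespace QuadraticRoot

variable {d r : ℂ} {a : ℝ}

open ComplexConjugate in
theorem sq_norm_mul_add_add_mul_conj_eq_zero (hr : r ^ 2 + d * r + a = 0) :
    (‖r‖ ^ 2 : ℝ) * (r + d) + a * conj r = 0 := by
  push_cast
  linear_combination conj r * hr - (r + d) * Complex.mul_conj' r

theorem neg_re_mul_eq (hr : r ^ 2 + d * r + a = 0) :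
    -r.re * (‖r‖ ^ 2 + a) = d.re * ‖r‖ ^ 2 := by
  have h := congrArg Complex.re (sq_norm_mul_add_add_mul_conj_eq_zero hr)
  simp only [Complex.add_re, Complex.re_ofReal_mul, Complex.conj_re, Complex.zero_re] at h
  linear_combination -h

theorem im_mul_eq (hr : r ^ 2 + d * r + a = 0) :
    r.im * (‖r‖ ^ 2 - a) = -(d.im * ‖r‖ ^ 2) := by
  have h := congrArg Complex.im (sq_norm_mul_add_add_mul_conj_eq_zero hr)
  simp only [Complex.add_im, Complex.im_ofReal_mul, Complex.conj_im, Complex.zero_im] at h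
  linear_combination h

theorem norm_pos (hr : r ^ 2 + d * r + a = 0) (ha : 0 < a) : 0 < ‖r‖ := by
  refine norm_pos_iff.2 fun h => ha.ne' ?_
  simpa [h] using hr

theorem sq_sub_le (hr : r ^ 2 + d * r + a = 0) (ha : 0 < a) :
    (‖r‖ ^ 2 - a) ^ 2 ≤ ‖d‖ ^ 2 * ‖r‖ ^ 2 := by
  have ht : 0 < ‖r‖ ^ 2 := pow_pos (norm_pos hr ha) 2
  have hre := neg_re_mul_eq hr
  have him := im_mul_eq hr
  have hr2 : ‖r‖ ^ 2 = r.re ^ 2 + r.im ^ 2 := by rw [Complex.sq_norm, Complex.normSq_apply]; ring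
  have hd2 : ‖d‖ ^ 2 = d.re ^ 2 + d.im ^ 2 := by rw [Complex.sq_norm, Complex.normSq_apply]; ring
  have key : ‖r‖ ^ 2 * (‖r‖ ^ 2 - a) ^ 2 ≤ ‖d‖ ^ 2 * ‖r‖ ^ 2 * ‖r‖ ^ 2 := by
    have e : ‖d‖ ^ 2 * ‖r‖ ^ 2 * ‖r‖ ^ 2
        = (-r.re * (‖r‖ ^ 2 + a)) ^ 2 + (r.im * (‖r‖ ^ 2 - a)) ^ 2 := by
      rw [hre, him, hd2]; ring
    rw [e, hr2]
    nlinarith [mul_nonneg (mul_nonneg ht.le ha.le) (sq_nonneg r.re)]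
  nlinarith

theorem inv_le_neg_re {β Λ : ℝ} (hr : r ^ 2 + d * r + a = 0) (ha : 0 < a) (hβ : 0 < β)
    (hdβ : β ≤ d.re) (hΛ : 0 ≤ Λ) (h : a ≤ d.re * Λ * ‖r‖ ^ 2) : (1 / β + Λ)⁻¹ ≤ -r.re := by
  have ht : 0 < ‖r‖ ^ 2 := pow_pos (norm_pos hr ha) 2
  have hβt : ‖r‖ ^ 2 ≤ d.re * ‖r‖ ^ 2 / β := by
    rw [le_div_iff₀ hβ]; nlinarith
  rw [inv_le_iff_one_le_mul₀ (by positivity)]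
  refine le_of_mul_le_mul_right ?_ (by positivity : 0 < ‖r‖ ^ 2 + a)
  calc 1 * (‖r‖ ^ 2 + a) ≤ d.re * ‖r‖ ^ 2 / β + d.re * Λ * ‖r‖ ^ 2 := by linarith
    _ = d.re * ‖r‖ ^ 2 * (1 / β + Λ) := by ring
    _ = -r.re * (1 / β + Λ) * (‖r‖ ^ 2 + a) := by rw [← neg_re_mul_eq hr]; ring

theorem re_le {α β δ N u v : ℝ} (hr : r ^ 2 + d * r + a = 0) (ha : 0 < a) (hα : 0 < α)
    (hβ : 0 < β) (hδ : 0 < δ) (hu : 0 < u) (hv : 0 < v) (huv : u * v = 1 / (α * δ))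
    (hdβ : β ≤ d.re) (hdδ : δ * a ≤ d.re) (hdα : α ≤ d.re * a) (hdN : ‖d‖ ≤ N * a) :
    r.re ≤ -(1 / β + N ^ 2 / (2 * δ) + (u + v) / 2
      + √((u + v + N ^ 2 / δ) ^ 2 - 4 / (α * δ)) / 2)⁻¹ := by
  set K := N ^ 2 / δ with hK
  obtain ⟨huΛ, hvΛ, hΛ⟩ := upper_root_spec hu.le hv.le (by positivity : 0 ≤ K)
  set Λ := (u + v + K + √((u + v + K) ^ 2 - 4 * (u * v))) / 2
  have hΦ : 1 / β + N ^ 2 / (2 * δ) + (u + v) / 2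
      + √((u + v + K) ^ 2 - 4 / (α * δ)) / 2 = 1 / β + Λ := by
    rw [show 4 / (α * δ) = 4 * (u * v) by rw [huv]; ring]; ring
  rw [le_neg, hΦ]
  -- Since `-μ (|r|² + a) = (re d) |r|²`, it suffices that `a ≤ (re d) Λ |r|²`. Both `Y = (re d) Λ`
  -- and `a / |r|²` are compared with the roots of `(x - 1)² = K (re d) x`, `Y` lying above them.
  have hd : 0 < d.re := hβ.trans_le hdβ
  have hpq : 1 ≤ (d.re * u) * (d.re * v) := by
    rw [mul_mul_mul_comm, huv, mul_one_div, le_div_iff₀ (by positivity)]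
    nlinarith [mul_le_mul_of_nonneg_right hdα hδ.le]
  have hpY : d.re * u ≤ d.re * Λ := mul_le_mul_of_nonneg_left huΛ hd.le
  have hqY : d.re * v ≤ d.re * Λ := mul_le_mul_of_nonneg_left hvΛ hd.le
  have hY : 1 ≤ d.re * Λ := by
    have hY0 : 0 ≤ d.re * Λ := (by positivity : 0 ≤ d.re * u).trans hpY
    nlinarith [mul_le_mul hpY hqY (by positivity) hY0]
  have hKY : K * d.re * (d.re * Λ) ≤ (d.re * Λ - 1) ^ 2 := by
    calc K * d.re * (d.re * Λ) = (d.re * Λ - d.re * u) * (d.re * Λ - d.re * v) := by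
          linear_combination (-d.re ^ 2) * hΛ
      _ ≤ _ := sub_mul_sub_le_sq (by positivity) (by positivity) hpq hpY
  have hNa : ‖d‖ ^ 2 ≤ K * d.re * a := by
    calc ‖d‖ ^ 2 ≤ N ^ 2 * a * a := by nlinarith [norm_nonneg d]
      _ ≤ N ^ 2 * (d.re / δ) * a := by gcongr; rwa [le_div_iff₀ hδ, mul_comm]
      _ = K * d.re * a := by rw [hK]; ring
  have hta : (‖r‖ ^ 2 - a) ^ 2 ≤ K * d.re * a * ‖r‖ ^ 2 :=
    (sq_sub_le hr ha).trans (mul_le_mul_of_nonneg_right hNa (sq_nonneg _))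
  have hmain := le_mul_of_sq_sub_le ha (pow_pos (norm_pos hr ha) 2) hY hta hKY
  exact inv_le_neg_re hr ha hβ hdβ (hu.le.trans huΛ) (by linarith)

theorem abs_im_le {β δ ν b c Z : ℝ} (hr : r ^ 2 + d * r + a = 0) (ha : 0 < a) (hβ : 0 < β)
    (hδ : 0 < δ) (hdβ : β ≤ d.re) (hdδ : δ * a ≤ d.re) (hsec : |d.im| ≤ ν * d.re)
    (hb : 0 ≤ b) (hbc : b ≤ c) (hZ : 0 < Z) (hZcb : Z ≤ 2 * (c + b)) :
    |r.im| ≤ (ν + 2 / (δ * Z) + (c - b) / β) * |r.re| + b := by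
  set t := ‖r‖ ^ 2
  have ht : 0 < t := pow_pos (norm_pos hr ha) 2
  have hre : |r.re| * (t + a) = d.re * t := by
    rw [← neg_re_mul_eq hr, abs_of_neg]
    nlinarith [neg_re_mul_eq hr, hβ.trans_le hdβ]
  have him : |r.im| * |t - a| ≤ ν * (d.re * t) := by
    rw [← abs_mul, im_mul_eq hr, abs_neg, abs_mul, abs_of_pos ht, ← mul_assoc]
    exact mul_le_mul_of_nonneg_right hsec ht.le
  have hmin : |r.im| * (t + a) = |r.im| * |t - a| + 2 * |r.im| * min t a := by
    rw [← max_sub_min_eq_abs', ← min_add_max t a]; ring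
  have hamgm : 2 * |r.im| * min t a ≤ 2 * a * t / Z + c * t + a * b :=
    (mul_le_mul_of_nonneg_right (by linarith [Complex.abs_im_le_norm r]) (by positivity)).trans
      (two_mul_mul_min_le ha.le hb (hb.trans hbc) hZ hZcb)
  have h₁ : 2 * a * t / Z ≤ 2 / (δ * Z) * (d.re * t) := by
    rw [div_mul_eq_mul_div, div_le_div_iff₀ hZ (by positivity)]
    nlinarith [mul_le_mul_of_nonneg_right hdδ (by positivity : 0 ≤ 2 * t * Z)]
  have h₂ : (c - b) * t ≤ (c - b) / β * (d.re * t) := by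
    rw [div_mul_eq_mul_div, le_div_iff₀ hβ]
    nlinarith [mul_le_mul_of_nonneg_left (mul_le_mul_of_nonneg_right hdβ ht.le) (sub_nonneg.2 hbc)]
  refine le_of_mul_le_mul_right ?_ (by positivity : 0 < t + a)
  have hM : (ν + 2 / (δ * Z) + (c - b) / β) * |r.re| * (t + a)
      = (ν + 2 / (δ * Z) + (c - b) / β) * (d.re * t) := by rw [mul_assoc, hre]
  rw [hmin, add_mul, hM]
  nlinarith

theorem mem_spectralRegion {α β δ N ν θ b : ℝ} (hr : r ^ 2 + d * r + a = 0) (ha : 0 < a)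
    (hα : 0 < α) (hβ : 0 < β) (hδ : 0 < δ) (hθ : 0 < θ) (hb0 : 0 ≤ b) (hb : b ≤ √θ)
    (hdβ : β ≤ d.re) (hdδ : δ * a ≤ d.re) (hdα : α ≤ d.re * a) (hdN : ‖d‖ ≤ N * a)
    (hsec : |d.im| ≤ ν * d.re) :
    r ∈ spectralRegion (1 / β + N ^ 2 / (2 * δ) + (θ / α + 1 / (θ * δ)) / 2
        + √((θ / α + 1 / (θ * δ) + N ^ 2 / δ) ^ 2 - 4 / (α * δ)) / 2)⁻¹
      (ν + 2 / (δ * (b + √(b ^ 2 + 4 * θ))) + (√θ - b) / β) b := by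
  have hZ : b + √(b ^ 2 + 4 * θ) ≤ 2 * (√θ + b) := by
    have : √(b ^ 2 + 4 * θ) ≤ 2 * √θ + b := Real.sqrt_le_iff.2
      ⟨by positivity, by nlinarith [Real.sq_sqrt hθ.le, Real.sqrt_nonneg θ]⟩
    linarith
  exact ⟨re_le hr ha hα hβ hδ (by positivity) (by positivity) (by field_simp) hdβ hdδ hdα hdN,
    abs_im_le hr ha hβ hδ hdβ hdδ hsec hb0 hb (by positivity) hZ⟩

end QuadraticRoot

theorem ContinuousLinearMap.norm_le_opNorm_mul_norm_of_mul_eq_one {𝕜 E : Type*}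
    [NontriviallyNormedField 𝕜] [NormedAddCommGroup E] [NormedSpace 𝕜 E] {S T : E →L[𝕜] E}
    (h : T * S = 1) (x : E) : ‖x‖ ≤ ‖T‖ * ‖S x‖ := by
  have hx := T.le_opNorm (S x)
  rwa [← mul_apply_eq_comp, h, one_apply_eq_self] at hx

theorem IsSelfAdjoint.of_mul_eq_one {R : Type*} [Monoid R] [StarMul R] {s t : R}
    (hs : IsSelfAdjoint s) (h : s * t = 1) : IsSelfAdjoint t := by
  refine left_inv_eq_right_inv ?_ h
  rw [← hs.star_eq, ← star_mul, h, star_one]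

theorem sq_norm_mul_le_norm_inner_of_norm_eq_one {𝕜 E : Type*} [RCLike 𝕜] [NormedAddCommGroup E]
    [InnerProductSpace 𝕜 E] {f : E →L[𝕜] E} {c : ℝ}
    (h : ∀ y, ‖y‖ = 1 → c ≤ ‖⟪f y, y⟫_𝕜‖) (x : E) : ‖x‖ ^ 2 * c ≤ ‖⟪f x, x⟫_𝕜‖ := by
  rcases eq_or_ne x 0 with rfl | hx
  · simp
  have hx' : 0 < ‖x‖ := norm_pos_iff.2 hx
  have hy := h ((‖x‖⁻¹ : 𝕜) • x) (by simp [norm_smul, hx'.ne'])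
  rw [map_smul, inner_smul_left, inner_smul_right, norm_mul, norm_mul] at hy
  simp only [RCLike.norm_conj, norm_inv, RCLike.norm_ofReal, abs_norm] at hy
  calc ‖x‖ ^ 2 * c ≤ ‖x‖ ^ 2 * (‖x‖⁻¹ * (‖x‖⁻¹ * ‖⟪f x, x⟫_𝕜‖)) := by gcongr
    _ = ‖⟪f x, x⟫_𝕜‖ := by field_simp

section

variable {H : Type*} [NormedAddCommGroup H] [InnerProductSpace ℂ H]

theorem inner_pencil_apply_self (A D : H →L[ℂ] H) (lam : ℂ) {y : H} (hy : ‖y‖ = 1) :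
    ⟪(lam ^ 2 • 1 + lam • D + A : H →L[ℂ] H) y, y⟫_ℂ
      = (starRingEnd ℂ lam) ^ 2 + ⟪D y, y⟫_ℂ * starRingEnd ℂ lam + ⟪A y, y⟫_ℂ := by
  simp [inner_self_eq_norm_sq_to_K, hy]

namespace Tlin

theorem algebraMap_sub_apply (A D : H →L[ℂ] H) (lam : ℂ) (w : H × H) :
    (algebraMap ℂ ((H × H) →L[ℂ] (H × H)) lam - Tlin A D) w
      = (lam • w.1 + D w.1 + A w.2, lam • w.2 - w.1) := by
  ext
  · simp only [Tlin, Algebra.algebraMap_eq_smul_one, sub_apply, smul_apply, one_apply_eq_self,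
      ContinuousLinearMap.prod_apply, neg_apply, ContinuousLinearMap.comp_apply,
      ContinuousLinearMap.coe_fst', ContinuousLinearMap.coe_snd', Prod.fst_sub, Prod.smul_fst]
    abel
  · simp [Tlin, Algebra.algebraMap_eq_smul_one]

theorem bijective_algebraMap_sub {A D : H →L[ℂ] H} {lam : ℂ}
    (h : Function.Bijective (lam ^ 2 • 1 + lam • D + A : H →L[ℂ] H)) :
    Function.Bijective (algebraMap ℂ ((H × H) →L[ℂ] (H × H)) lam - Tlin A D) := by
  have hQ : ∀ v, (lam ^ 2 • 1 + lam • D + A : H →L[ℂ] H) v = lam ^ 2 • v + lam • D v + A v :=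
    fun v => by simp
  refine ⟨(injective_iff_map_eq_zero _).2 fun w hw => ?_, fun f => ?_⟩
  · rw [algebraMap_sub_apply, Prod.mk_eq_zero] at hw
    have h₁ : w.1 = lam • w.2 := (sub_eq_zero.1 hw.2).symm
    have h₂ : w.2 = 0 := h.1 <| by
      rw [h₁, map_smul] at hw
      rw [map_zero, hQ, ← hw.1]
      module
    ext
    · rw [h₁, h₂, smul_zero]; rfl
    · exact h₂
  · obtain ⟨v, hv⟩ := h.2 (f.1 + lam • f.2 + D f.2)
    refine ⟨(lam • v - f.2, v), ?_⟩
    rw [hQ] at hv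
    rw [algebraMap_sub_apply, map_sub, map_smul]
    ext
    · simp only
      linear_combination (norm := module) hv
    · simp

theorem notMem_spectrum [CompleteSpace H] {A D : H →L[ℂ] H} {lam : ℂ}
    (h : IsUnit (lam ^ 2 • 1 + lam • D + A : H →L[ℂ] H)) : lam ∉ spectrum ℂ (Tlin A D) :=
  spectrum.notMem_iff.2 <| ContinuousLinearMap.isUnit_iff_bijective.2 <|
    bijective_algebraMap_sub (ContinuousLinearMap.isUnit_iff_bijective.1 h)

open ComplexConjugate in
theorem spectrum_subset [CompleteSpace H] {A D : H →L[ℂ] H} {Ω : Set ℂ} (hΩ : IsClosed Ω)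
    (hconj : ∀ z ∈ Ω, conj z ∈ Ω)
    (hroots : ∀ y : H, ‖y‖ = 1 → ∀ r : ℂ, r ^ 2 + ⟪D y, y⟫_ℂ * r + ⟪A y, y⟫_ℂ = 0 → r ∈ Ω) :
    spectrum ℂ (Tlin A D) ⊆ Ω := by
  intro lam hlam
  by_contra hlamΩ
  have hconjΩ : conj lam ∉ Ω := fun h => hlamΩ (by simpa using hconj _ h)
  obtain ⟨ε, hε, hball⟩ := Metric.isOpen_iff.1 hΩ.isOpen_compl _ hconjΩ
  have hfar : ∀ r ∈ Ω, ε ≤ ‖conj lam - r‖ := fun r hr => by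
    by_contra! h
    exact hball (by rwa [Metric.mem_ball, dist_comm, dist_eq_norm]) hr
  have hunit : ∀ y : H, ‖y‖ = 1 → ε ^ 2 ≤ ‖⟪(lam ^ 2 • 1 + lam • D + A : H →L[ℂ] H) y, y⟫_ℂ‖ := by
    intro y hy
    obtain ⟨r₁, r₂, hfac⟩ := exists_sq_add_mul_add_eq_mul ⟪D y, y⟫_ℂ ⟪A y, y⟫_ℂ
    have h₁ := hfar r₁ (hroots y hy r₁ (by simp [hfac]))
    have h₂ := hfar r₂ (hroots y hy r₂ (by simp [hfac]))
    rw [inner_pencil_apply_self A D lam hy, hfac, norm_mul, sq]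
    exact mul_le_mul h₁ h₂ hε.le (norm_nonneg _)
  exact Tlin.notMem_spectrum (ContinuousLinearMap.isUnit_of_forall_le_norm_inner_map _
    (c := ⟨ε ^ 2, by positivity⟩) (NNReal.coe_pos.1 (pow_pos hε 2))
    (sq_norm_mul_le_norm_inner_of_norm_eq_one hunit)) hlam

end Tlin

theorem inner_mul_self_apply_self [CompleteSpace H] {S : H →L[ℂ] H} (hS : IsSelfAdjoint S)
    (x : H) : ⟪(S * S) x, x⟫_ℂ = (‖S x‖ ^ 2 : ℝ) := by
  have hsym : ∀ u v, ⟪S u, v⟫_ℂ = ⟪u, S v⟫_ℂ := hS.isSymmetric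
  rw [mul_apply_eq_comp, hsym, inner_self_eq_norm_sq_to_K]
  norm_cast

theorem sq_norm_le_norm_mul_norm [CompleteSpace H] {S Sinv : H →L[ℂ] H} (hS : IsSelfAdjoint S)
    (hSinv : S * Sinv = 1) (x : H) : ‖x‖ ^ 2 ≤ ‖S x‖ * ‖Sinv x‖ := by
  have hsym : ∀ u v, ⟪S u, v⟫_ℂ = ⟪u, S v⟫_ℂ := hS.isSymmetric
  have h : ⟪S x, Sinv x⟫_ℂ = ⟪x, x⟫_ℂ := by
    rw [hsym, ← mul_apply_eq_comp, hSinv, one_apply_eq_self]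
  calc ‖x‖ ^ 2 = ‖⟪S x, Sinv x⟫_ℂ‖ := by rw [h, inner_self_eq_norm_sq_to_K]; norm_cast; simp
    _ ≤ ‖S x‖ * ‖Sinv x‖ := norm_inner_le_norm _ _

theorem le_re_inner_mul_sq_norm [CompleteSpace H] {D S Sinv : H →L[ℂ] H} (hS : IsSelfAdjoint S)
    (hSinv : S * Sinv = 1) {c : ℝ} (hc : 0 ≤ c) (hcD : ∀ x, c * ‖Sinv x‖ ^ 2 ≤ (⟪D x, x⟫_ℂ).re)
    {y : H} (hy : ‖y‖ = 1) : c ≤ (⟪D y, y⟫_ℂ).re * ‖S y‖ ^ 2 := by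
  have h := sq_norm_le_norm_mul_norm hS hSinv y
  rw [hy, one_pow] at h
  have h' : 1 ≤ ‖S y‖ ^ 2 * ‖Sinv y‖ ^ 2 := by rw [← mul_pow]; exact one_le_pow₀ h
  nlinarith [mul_le_mul_of_nonneg_left (hcD y) (sq_nonneg ‖S y‖), mul_le_mul_of_nonneg_left h' hc]

theorem norm_inner_le_norm_mul_sq_norm [CompleteSpace H] {D S Sinv : H →L[ℂ] H}
    (hSinv : IsSelfAdjoint Sinv) (hSinv' : Sinv * S = 1) (x : H) :
    ‖⟪D x, x⟫_ℂ‖ ≤ ‖Sinv * D * Sinv‖ * ‖S x‖ ^ 2 := by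
  have hx : Sinv (S x) = x := by rw [← mul_apply_eq_comp, hSinv', one_apply_eq_self]
  have hsym : ∀ u v, ⟪Sinv u, v⟫_ℂ = ⟪u, Sinv v⟫_ℂ := hSinv.isSymmetric
  have h : ⟪D x, x⟫_ℂ = ⟪(Sinv * D * Sinv) (S x), S x⟫_ℂ := by
    rw [mul_apply_eq_comp, mul_apply_eq_comp, hx, hsym, hx]
  rw [h, sq, ← mul_assoc]
  exact (norm_inner_le_norm _ _).trans (by gcongr; exact ContinuousLinearMap.le_opNorm _ _)

theorem ciInf_re_inner_div_mul_le {D : H →L[ℂ] H} (hD : ∀ x, 0 ≤ (⟪D x, x⟫_ℂ).re)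
    (g : H →L[ℂ] H) (x : H) :
    (⨅ x : {x : H // x ≠ 0}, (⟪D x, x⟫_ℂ).re / ‖g x‖ ^ 2) * ‖g x‖ ^ 2 ≤ (⟪D x, x⟫_ℂ).re := by
  rcases eq_or_ne (g x) 0 with hgx | hgx
  · simpa [hgx] using hD x
  have hx : x ≠ 0 := by rintro rfl; simp at hgx
  refine (le_div_iff₀ (by positivity)).1 (ciInf_le ⟨0, ?_⟩ (⟨x, hx⟩ : {x : H // x ≠ 0}))
  rintro _ ⟨y, rfl⟩
  exact div_nonneg (hD y) (sq_nonneg _)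

theorem ciInf_re_inner_div_pos [Nontrivial H] {D S g : H →L[ℂ] H} {δ C : ℝ} (hδ : 0 < δ)
    (hg : ∀ x, x ≠ 0 → g x ≠ 0) (hgS : ∀ x, ‖g x‖ ≤ C * ‖S x‖)
    (hδD : ∀ x, δ * ‖S x‖ ^ 2 ≤ (⟪D x, x⟫_ℂ).re) :
    0 < ⨅ x : {x : H // x ≠ 0}, (⟪D x, x⟫_ℂ).re / ‖g x‖ ^ 2 := by
  obtain ⟨x₀, hx₀⟩ := exists_ne (0 : H)
  have hC : 0 < C :=
    pos_of_mul_pos_left ((norm_pos_iff.2 (hg x₀ hx₀)).trans_le (hgS x₀)) (norm_nonneg _)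
  have : Nonempty {x : H // x ≠ 0} := ⟨⟨x₀, hx₀⟩⟩
  refine (by positivity : 0 < δ / C ^ 2).trans_le (le_ciInf fun x => ?_)
  rw [le_div_iff₀ (by have := hg x x.2; positivity)]
  calc δ / C ^ 2 * ‖g x‖ ^ 2 ≤ δ / C ^ 2 * (C * ‖S x‖) ^ 2 := by gcongr; exact hgS x
    _ = δ * ‖S x‖ ^ 2 := by field_simp
    _ ≤ _ := hδD x

end

theorem spectrum_subset_theta_b_general
    {H : Type*} [NormedAddCommGroup H] [InnerProductSpace ℂ H] [CompleteSpace H]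
    [Nontrivial H]
    (A D S Sinv : H →L[ℂ] H)
    (hSsa : IsSelfAdjoint S)
    (hSsq : S * S = A)
    (hSinv : S * Sinv = 1) (hSinv' : Sinv * S = 1)
    (hDacc : ∀ x : H, 0 ≤ (inner ℂ (D x) x : ℂ).re)
    (ν : ℝ)
    (hDsec : ∀ x : H, |(inner ℂ (D x) x : ℂ).im| ≤ ν * (inner ℂ (D x) x : ℂ).re)
    (α β δ : ℝ)
    (hα : α = ⨅ x : {x : H // x ≠ 0}, (inner ℂ (D (x : H)) (x : H) : ℂ).re / ‖Sinv (x : H)‖ ^ 2)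
    (hβ : β = ⨅ x : {x : H // x ≠ 0}, (inner ℂ (D (x : H)) (x : H) : ℂ).re / ‖(x : H)‖ ^ 2)
    (hδ : δ = ⨅ x : {x : H // x ≠ 0}, (inner ℂ (D (x : H)) (x : H) : ℂ).re / ‖S (x : H)‖ ^ 2)
    (hδpos : 0 < δ)
    (θ : ℝ) (hθ : 0 < θ)
    (b : ℝ) (hb0 : 0 ≤ b) (hb : b ≤ Real.sqrt θ)
    (ω M : ℝ)
    (hω : ω = (1 / β + ‖Sinv * D * Sinv‖ ^ 2 / (2 * δ)
        + (θ / α + 1 / (θ * δ)) / 2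
        + Real.sqrt ((θ / α + 1 / (θ * δ) + ‖Sinv * D * Sinv‖ ^ 2 / δ) ^ 2
            - 4 / (α * δ)) / 2)⁻¹)
    (hM : M = ν + 2 / (δ * (b + Real.sqrt (b ^ 2 + 4 * θ))) + (Real.sqrt θ - b) / β) :
    spectrum ℂ (Tlin A D) ⊆
      {lam : ℂ | lam.re ≤ -ω ∧ |lam.im| ≤ M * |lam.re| + b} := by
  subst hω hM
  have hSinv_sa : IsSelfAdjoint Sinv := hSsa.of_mul_eq_one hSinv
  have hnorm := ContinuousLinearMap.norm_le_opNorm_mul_norm_of_mul_eq_one hSinv'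
  have hδD : ∀ x, δ * ‖S x‖ ^ 2 ≤ (⟪D x, x⟫_ℂ).re := by
    rw [hδ]; exact ciInf_re_inner_div_mul_le hDacc S
  have hβpos : 0 < β := by
    rw [hβ]; exact ciInf_re_inner_div_pos (g := 1) hδpos (fun _ hx => hx) hnorm hδD
  have hαpos : 0 < α := by
    rw [hα]
    refine ciInf_re_inner_div_pos (C := ‖Sinv‖ ^ 2) hδpos (fun x hx h => hx ?_) (fun x => ?_) hδD
    · simpa [h] using (DFunLike.congr_fun hSinv x).symm
    · exact (Sinv.le_opNorm x).trans (by rw [sq, mul_assoc]; gcongr; exact hnorm x)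
  refine Tlin.spectrum_subset (isClosed_spectralRegion _ _ b)
    (fun z hz => conj_mem_spectralRegion hz) fun y hy r hr => ?_
  rw [← hSsq, inner_mul_self_apply_self hSsa] at hr
  have ha : 0 < ‖S y‖ ^ 2 :=
    pow_pos (norm_pos_iff.2 fun h => absurd (hnorm y) (by simp [h, hy])) 2
  have hdβ : β ≤ (⟪D y, y⟫_ℂ).re := by
    simpa [hy, ← hβ] using ciInf_re_inner_div_mul_le hDacc 1 y
  have hdα : α ≤ (⟪D y, y⟫_ℂ).re * ‖S y‖ ^ 2 :=
    le_re_inner_mul_sq_norm hSsa hSinv hαpos.le (hα ▸ ciInf_re_inner_div_mul_le hDacc Sinv) hy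
  exact QuadraticRoot.mem_spectralRegion hr ha hαpos hβpos hδpos hθ hb0 hb hdβ (hδD y) hdα
    (norm_inner_le_norm_mul_sq_norm hSinv_sa hSinv' y) (hDsec y)

/-- if `δ > 0`, then for every `θ > 0` and every `b` with `0 ≤ b ≤ √θ`,
the spectrum of `T` is contained in
`{λ : re λ ≤ −ω_θ and |im λ| ≤ M_{θ,b}·|re λ| + b}`. -/
theorem spectrum_subset_theta_b
    {H : Type*} [NormedAddCommGroup H] [InnerProductSpace ℂ H] [CompleteSpace H]
    [Nontrivial H]
    (A D S Sinv : H →L[ℂ] H)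
    (hA : IsSelfAdjoint A) (a₀ : ℝ) (ha₀ : 0 < a₀)
    (hApd : ∀ x : H, a₀ * ‖x‖ ^ 2 ≤ (inner ℂ (A x) x : ℂ).re)
    (hSsa : IsSelfAdjoint S) (hSpos : ∀ x : H, 0 ≤ (inner ℂ (S x) x : ℂ).re)
    (hSsq : S * S = A)
    (hSinv : S * Sinv = 1) (hSinv' : Sinv * S = 1)
    (hDacc : ∀ x : H, 0 ≤ (inner ℂ (D x) x : ℂ).re)
    (ν : ℝ) (hν : 0 < ν)
    (hDsec : ∀ x : H, |(inner ℂ (D x) x : ℂ).im| ≤ ν * (inner ℂ (D x) x : ℂ).re)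
    (α β δ : ℝ)
    (hα : α = ⨅ x : {x : H // x ≠ 0}, (inner ℂ (D (x : H)) (x : H) : ℂ).re / ‖Sinv (x : H)‖ ^ 2)
    (hβ : β = ⨅ x : {x : H // x ≠ 0}, (inner ℂ (D (x : H)) (x : H) : ℂ).re / ‖(x : H)‖ ^ 2)
    (hδ : δ = ⨅ x : {x : H // x ≠ 0}, (inner ℂ (D (x : H)) (x : H) : ℂ).re / ‖S (x : H)‖ ^ 2)
    (hδpos : 0 < δ)
    (θ : ℝ) (hθ : 0 < θ)
    (b : ℝ) (hb0 : 0 ≤ b) (hb : b ≤ Real.sqrt θ)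
    (ω M : ℝ)
    (hω : ω = (1 / β + ‖Sinv * D * Sinv‖ ^ 2 / (2 * δ)
        + (θ / α + 1 / (θ * δ)) / 2
        + Real.sqrt ((θ / α + 1 / (θ * δ) + ‖Sinv * D * Sinv‖ ^ 2 / δ) ^ 2
            - 4 / (α * δ)) / 2)⁻¹)
    (hM : M = ν + 2 / (δ * (b + Real.sqrt (b ^ 2 + 4 * θ))) + (Real.sqrt θ - b) / β) :
    spectrum ℂ (Tlin A D) ⊆
      {lam : ℂ | lam.re ≤ -ω ∧ |lam.im| ≤ M * |lam.re| + b} :=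
  spectrum_subset_theta_b_general A D S Sinv hSsa hSsq hSinv hSinv' hDacc ν hDsec α β δ hα hβ hδ
    hδpos θ hθ b hb0 hb ω M hω hM
end
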